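/- Let S be a symmetric positive semidefinite d×d real matrix and Σ a symmetric positive definite d×d real matrix. Then √λ_min(Σ) · S^{1/2} ⪯ (S^{1/2} Σ S^{1/2})^{1/2} ⪯ √λ_max(Σ) · S^{1/2} in the Löwner order. -/

import Mathlib

open Matrix BigOperators Finset
open scoped Classical

/-- Unique positive semidefinite square root of a positive semidefinite matrix
(and junk value `0` on other matrices). -/
noncomputable def msqrt {d : ℕ} (M : Matrix (Fin d) (Fin d) ℝ) :
    Matrix (Fin d) (Fin d) ℝ :=
  if h : M.PosSemidef then
    h.1.eigenvectorUnitary.1 * diagonal (fun i => Real.sqrt (h.1.eigenvalues i)) *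
      (star h.1.eigenvectorUnitary : Matrix (Fin d) (Fin d) ℝ) else 0

/-- Smallest eigenvalue of a symmetric matrix (junk value `0` otherwise). -/
noncomputable def lmin {d : ℕ} (M : Matrix (Fin d) (Fin d) ℝ) : ℝ :=
  if h : M.IsHermitian then ⨅ i, h.eigenvalues i else 0

/-- Largest eigenvalue of a symmetric matrix (junk value `0` otherwise). -/
noncomputable def lmax {d : ℕ} (M : Matrix (Fin d) (Fin d) ℝ) : ℝ :=
  if h : M.IsHermitian then ⨆ i, h.eigenvalues i else 0

/-- Squared Bures–Wasserstein distance. -/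
noncomputable def W2sq {d : ℕ} (A B : Matrix (Fin d) (Fin d) ℝ) : ℝ :=
  A.trace + B.trace - 2 * (msqrt (msqrt A * B * msqrt A)).trace

/-- The conditional barycenter objective `F`. -/
noncomputable def Fobj {d n : ℕ} (Sig : Fin n → Matrix (Fin d) (Fin d) ℝ)
    (lam : Fin n → ℝ) (S : Matrix (Fin d) (Fin d) ℝ) : ℝ :=
  ∑ k, lam k * W2sq S (Sig k)

/-- Geometric mean `GM(S⁻¹, Σ) = S^{-1/2} (S^{1/2} Σ S^{1/2})^{1/2} S^{-1/2}`. -/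
noncomputable def GMinv {d : ℕ} (S Sigma : Matrix (Fin d) (Fin d) ℝ) :
    Matrix (Fin d) (Fin d) ℝ :=
  (msqrt S)⁻¹ * msqrt (msqrt S * Sigma * msqrt S) * (msqrt S)⁻¹

/-- The Spectral Dominance of Positive Weights condition. -/
def SDPW {d n : ℕ} (Sig : Fin n → Matrix (Fin d) (Fin d) ℝ) (lam : Fin n → ℝ) : Prop :=
  ∑ j ∈ Finset.univ.filter (fun k => lam k < 0), (-lam j) * Real.sqrt (lmax (Sig j))
    < ∑ i ∈ Finset.univ.filter (fun k => 0 < lam k), lam i * Real.sqrt (lmin (Sig i))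

/-! With `R = S^{1/2}`, conjugating `λ_min • 1 ≤ Σ ≤ λ_max • 1` by `R` gives
`(√λ_min • R)² ≤ R Σ R = ((R Σ R)^{1/2})² ≤ (√λ_max • R)²`, and the squares can be removed
because `A² ≤ B²` implies `A ≤ B` for positive semidefinite `A`, `B` (test `B² - A²` against an
eigenvector of `B - A`). -/

open scoped MatrixOrder ComplexOrder

namespace Matrix

variable {𝕜 n : Type*} [RCLike 𝕜] [Fintype n] [DecidableEq n]

theorem le_of_mul_self_le_mul_self {A B : Matrix n n 𝕜} (hA : 0 ≤ A) (hB : 0 ≤ B)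
    (h : A * A ≤ B * B) : A ≤ B := by
  have hC : (B - A).IsHermitian := hB.posSemidef.1.sub hA.posSemidef.1
  refine hC.posSemidef_iff_eigenvalues_nonneg.mpr (Pi.le_def.mpr fun i => ?_)
  have hμ := hC.eigenvalues_eq i
  set v := ⇑(hC.eigenvectorBasis i)
  set μ := hC.eigenvalues i
  have hv : (B - A) *ᵥ v = (μ : 𝕜) • v := by
    rw [hC.mulVec_eigenvectorBasis, RCLike.real_smul_eq_coe_smul (K := 𝕜)]
  have hv' : star v ᵥ* (B - A) = (μ : 𝕜) • star v := by
    rw [← hC.eq, ← star_mulVec, hv, star_smul, RCLike.star_def, RCLike.conj_ofReal]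
  rw [sub_mulVec, dotProduct_sub, map_sub] at hμ
  -- `B² - A² = (B - A) B + A (B - A)` and `v` is an eigenvector of `B - A` on both sides
  have hquad : star v ⬝ᵥ (B * B - A * A) *ᵥ v
      = (μ : 𝕜) * (star v ⬝ᵥ B *ᵥ v + star v ⬝ᵥ A *ᵥ v) := by
    rw [show B * B - A * A = (B - A) * B + A * (B - A) by noncomm_ring, add_mulVec,
      ← mulVec_mulVec, ← mulVec_mulVec, hv, dotProduct_add, mulVec_smul, dotProduct_smul,
      dotProduct_mulVec, hv', smul_dotProduct, smul_eq_mul, smul_eq_mul, mul_add]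
  have hquad_nonneg := (le_iff.mp h).dotProduct_mulVec_nonneg v
  have hAv := hA.posSemidef.dotProduct_mulVec_nonneg v
  have hBv := hB.posSemidef.dotProduct_mulVec_nonneg v
  rw [hquad] at hquad_nonneg
  rw [RCLike.nonneg_iff] at hquad_nonneg hAv hBv
  simp only [RCLike.mul_re, RCLike.ofReal_re, RCLike.ofReal_im, zero_mul, sub_zero,
    map_add] at hquad_nonneg
  -- `x = re ⟪v, B v⟫ ≥ 0`, `y = re ⟪v, A v⟫ ≥ 0`, `μ = x - y` and `μ (x + y) ≥ 0` force `μ ≥ 0`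
  rw [Pi.zero_apply]
  nlinarith [hquad_nonneg.1, hAv.1, hBv.1]

theorem IsHermitian.smul_one_le {A : Matrix n n 𝕜} (hA : A.IsHermitian) {c : ℝ}
    (h : ∀ i, c ≤ hA.eigenvalues i) : c • (1 : Matrix n n 𝕜) ≤ A := by
  rw [← Algebra.algebraMap_eq_smul_one, algebraMap_le_iff_le_spectrum (ha := hA.isSelfAdjoint),
    hA.spectrum_real_eq_range_eigenvalues]
  rintro _ ⟨i, rfl⟩
  exact h i

theorem IsHermitian.le_smul_one {A : Matrix n n 𝕜} (hA : A.IsHermitian) {c : ℝ}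
    (h : ∀ i, hA.eigenvalues i ≤ c) : A ≤ c • (1 : Matrix n n 𝕜) := by
  rw [← Algebra.algebraMap_eq_smul_one, le_algebraMap_iff_spectrum_le (ha := hA.isSelfAdjoint),
    hA.spectrum_real_eq_range_eigenvalues]
  rintro _ ⟨i, rfl⟩
  exact h i

end Matrix

theorem sqrt_smul_mul_self {A : Type*} [Ring A] [Algebra ℝ A] {c : ℝ} (hc : 0 ≤ c) (a : A) :
    (√c • a) * (√c • a) = a * (c • 1) * a := by
  rw [smul_mul_smul_comm, Real.mul_self_sqrt hc, mul_smul_one, smul_mul_assoc]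

section MatrixSqrt

variable {d : ℕ}

theorem msqrt_nonneg (M : Matrix (Fin d) (Fin d) ℝ) : 0 ≤ msqrt M := by
  unfold msqrt
  split_ifs with hM
  · exact ((posSemidef_diagonal_iff.mpr fun i => Real.sqrt_nonneg _).mul_mul_conjTranspose_same
      _).nonneg
  · exact le_rfl

theorem msqrt_mul_self {M : Matrix (Fin d) (Fin d) ℝ} (hM : M.PosSemidef) :
    msqrt M * msqrt M = M := by
  rw [msqrt, dif_pos hM]
  have hU : (star hM.1.eigenvectorUnitary : Matrix (Fin d) (Fin d) ℝ) *
      (hM.1.eigenvectorUnitary : Matrix (Fin d) (Fin d) ℝ) = 1 :=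
    (Matrix.mem_unitaryGroup_iff').mp hM.1.eigenvectorUnitary.2
  conv_rhs => rw [hM.1.spectral_theorem, Unitary.conjStarAlgAut_apply]
  simp only [Matrix.mul_assoc]
  rw [← Matrix.mul_assoc _ (hM.1.eigenvectorUnitary : Matrix (Fin d) (Fin d) ℝ), hU,
    Matrix.one_mul, ← Matrix.mul_assoc (diagonal _), diagonal_mul_diagonal]
  congr 3
  funext i
  simp [Real.mul_self_sqrt (hM.eigenvalues_nonneg i)]

theorem sqrt_smul_le_msqrt_mul_mul {R Sigma : Matrix (Fin d) (Fin d) ℝ} (hR : 0 ≤ R) {c : ℝ}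
    (hc : 0 ≤ c) (h : c • 1 ≤ Sigma) : √c • R ≤ msqrt (R * Sigma * R) := by
  have hSigma : 0 ≤ Sigma := (PosSemidef.one.smul hc).nonneg.trans h
  refine le_of_mul_self_le_mul_self ((hR.posSemidef.smul (Real.sqrt_nonneg c)).nonneg)
    (msqrt_nonneg _) ?_
  rw [msqrt_mul_self (conjugate_nonneg_of_nonneg hSigma hR).posSemidef, sqrt_smul_mul_self hc]
  exact conjugate_le_conjugate_of_nonneg h hR

theorem msqrt_mul_mul_le_sqrt_smul {R Sigma : Matrix (Fin d) (Fin d) ℝ} (hR : 0 ≤ R)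
    (hSigma : 0 ≤ Sigma) {c : ℝ} (hc : 0 ≤ c) (h : Sigma ≤ c • 1) :
    msqrt (R * Sigma * R) ≤ √c • R := by
  refine le_of_mul_self_le_mul_self (msqrt_nonneg _)
    ((hR.posSemidef.smul (Real.sqrt_nonneg c)).nonneg) ?_
  rw [msqrt_mul_self (conjugate_nonneg_of_nonneg hSigma hR).posSemidef, sqrt_smul_mul_self hc]
  exact conjugate_le_conjugate_of_nonneg h hR

end MatrixSqrt

section ExtremeEigenvalues

variable {d : ℕ} {M : Matrix (Fin d) (Fin d) ℝ}

theorem lmin_nonneg (hM : M.PosSemidef) : 0 ≤ lmin M := by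
  rw [lmin, dif_pos hM.1]
  exact Real.iInf_nonneg hM.eigenvalues_nonneg

theorem lmax_nonneg (hM : M.PosSemidef) : 0 ≤ lmax M := by
  rw [lmax, dif_pos hM.1]
  exact Real.iSup_nonneg hM.eigenvalues_nonneg

theorem lmin_smul_one_le (hM : M.IsHermitian) : lmin M • 1 ≤ M := by
  refine hM.smul_one_le fun i => ?_
  rw [lmin, dif_pos hM]
  exact ciInf_le (Set.finite_range _).bddBelow i

theorem le_lmax_smul_one (hM : M.IsHermitian) : M ≤ lmax M • 1 := by
  refine hM.le_smul_one fun i => ?_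
  rw [lmax, dif_pos hM]
  exact le_ciSup (Set.finite_range _).bddAbove i

end ExtremeEigenvalues

theorem stmt1_general {d : ℕ} (S Sigma : Matrix (Fin d) (Fin d) ℝ)
    (hSigma : Sigma.PosDef) :
    (msqrt (msqrt S * Sigma * msqrt S) - Real.sqrt (lmin Sigma) • msqrt S).PosSemidef ∧
    (Real.sqrt (lmax Sigma) • msqrt S - msqrt (msqrt S * Sigma * msqrt S)).PosSemidef := by
  have hSigma₀ := hSigma.posSemidef
  exact ⟨sqrt_smul_le_msqrt_mul_mul (msqrt_nonneg S) (lmin_nonneg hSigma₀)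
      (lmin_smul_one_le hSigma₀.1),
    msqrt_mul_mul_le_sqrt_smul (msqrt_nonneg S) hSigma₀.nonneg (lmax_nonneg hSigma₀)
      (le_lmax_smul_one hSigma₀.1)⟩

/-- `√λmin(Σ) • S^(1/2) ⪯ (S^(1/2) Σ S^(1/2))^(1/2) ⪯ √λmax(Σ) • S^(1/2)`. -/
theorem stmt1 {d : ℕ} (S Sigma : Matrix (Fin d) (Fin d) ℝ)
    (hS : S.PosSemidef) (hSigma : Sigma.PosDef) :
    (msqrt (msqrt S * Sigma * msqrt S) - Real.sqrt (lmin Sigma) • msqrt S).PosSemidef ∧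
    (Real.sqrt (lmax Sigma) • msqrt S - msqrt (msqrt S * Sigma * msqrt S)).PosSemidef :=
  stmt1_general S Sigma hSigma
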